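/- Let R : [0,T]² → ℝ be continuous. Suppose ‖R‖_{ρ-var;[s,t]×[0,T]}^ρ ≤ C(t−s) for all 0 ≤ s ≤ t ≤ T and the symmetric bound in the second variable. Then for all rectangles [s₁,s₂]×[t₁,t₂] ⊆ [0,T]², one has ‖R‖_{ρ-var;[s₁,s₂]×[t₁,t₂]}^{2ρ} ≤ C²(s₂−s₁)(t₂−t₁). -/

import Mathlib

open Finset Set
open scoped ENNReal

def IsPartitionOn (a b : ℝ) (n : ℕ) (τ : ℕ → ℝ) : Prop :=
  Monotone τ ∧ τ 0 = a ∧ τ n = b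

/-- Rectangular increment of `R` over `[s,t]×[u,v]`. -/
def rectIncr (R : ℝ → ℝ → ℝ) (s t u v : ℝ) : ℝ :=
  R t v - R t u - R s v + R s u

/-- The 2d `p`-variation of `R` on `[a,b]×[c,d]` (via grid partitions), in `ℝ≥0∞`. -/
noncomputable def pVar2d (p : ℝ) (R : ℝ → ℝ → ℝ) (a b c d : ℝ) : ℝ≥0∞ :=
  ⨆ (n : ℕ) (m : ℕ) (τ : ℕ → ℝ) (σ : ℕ → ℝ)
    (_ : IsPartitionOn a b n τ) (_ : IsPartitionOn c d m σ),
    ENNReal.ofReal ((∑ i ∈ Finset.range n, ∑ j ∈ Finset.range m,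
      |rectIncr R (τ i) (τ (i + 1)) (σ j) (σ (j + 1))| ^ p) ^ (1 / p))

/-!
The 2d variation is monotone under enlarging the rectangle: a grid partition of a rectangle
extends to one of a larger rectangle by padding both partitions with the new endpoints, and
this only adds nonnegative terms. Hence the variation on `[s₁,s₂]×[t₁,t₂]` is dominated both
by that on the strip `[s₁,s₂]×[0,T]` and by that on `[0,T]×[t₁,t₂]`, so its square is at most
their product, and the two hypotheses bound the `ρ`-th powers of the factors.
-/

noncomputable def gridSum (p : ℝ) (R : ℝ → ℝ → ℝ) (n m : ℕ) (τ σ : ℕ → ℝ) : ℝ :=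
  ∑ i ∈ range n, ∑ j ∈ range m, |rectIncr R (τ i) (τ (i + 1)) (σ j) (σ (j + 1))| ^ p

lemma pVar2d_eq_iSup_gridSum (p : ℝ) (R : ℝ → ℝ → ℝ) (a b c d : ℝ) :
    pVar2d p R a b c d = ⨆ (n : ℕ) (m : ℕ) (τ : ℕ → ℝ) (σ : ℕ → ℝ)
      (_ : IsPartitionOn a b n τ) (_ : IsPartitionOn c d m σ),
      ENNReal.ofReal (gridSum p R n m τ σ ^ (1 / p)) :=
  rfl

/-- The partition `a', τ 0, …, τ n, b'` with `n + 2` intervals. -/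
def padPartition (a' b' : ℝ) (n : ℕ) (τ : ℕ → ℝ) (i : ℕ) : ℝ :=
  if i = 0 then a' else if i ≤ n + 1 then τ (i - 1) else b'

lemma padPartition_succ {a' b' : ℝ} {n i : ℕ} (τ : ℕ → ℝ) (hi : i ≤ n) :
    padPartition a' b' n τ (i + 1) = τ i := by
  simp [padPartition, hi]

lemma IsPartitionOn.pad {a b a' b' : ℝ} {n : ℕ} {τ : ℕ → ℝ}
    (hτ : IsPartitionOn a b n τ) (ha : a' ≤ a) (hb : b ≤ b') :
    IsPartitionOn a' b' (n + 2) (padPartition a' b' n τ) := by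
  obtain ⟨hmono, h0, hn⟩ := hτ
  refine ⟨monotone_nat_of_le_succ fun k => ?_, by simp [padPartition],
    by simp [padPartition]⟩
  rcases Nat.lt_or_ge k (n + 1) with hk | hk
  · rw [padPartition_succ τ (by omega)]
    rcases k with _ | k
    · simpa [padPartition, h0] using ha
    · rw [padPartition_succ τ (by omega)]
      exact hmono k.le_succ
  · rcases Nat.eq_or_lt_of_le hk with rfl | hk
    · rw [padPartition_succ τ le_rfl]
      simpa [padPartition, hn] using hb
    · simp [padPartition, show k ≠ 0 by omega, show ¬k ≤ n + 1 by omega,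
        show ¬k + 1 ≤ n + 1 by omega]

lemma sum_range_succ_le_sum_range_add_two {f : ℕ → ℝ} (hf : ∀ i, 0 ≤ f i) (n : ℕ) :
    ∑ i ∈ range n, f (i + 1) ≤ ∑ i ∈ range (n + 2), f i := by
  rw [sum_range_succ, sum_range_succ']
  linarith [hf 0, hf (n + 1)]

lemma gridSum_le_gridSum_padPartition {p : ℝ} (R : ℝ → ℝ → ℝ) (a' b' c' d' : ℝ) (n m : ℕ)
    (τ σ : ℕ → ℝ) :
    gridSum p R n m τ σ ≤
      gridSum p R (n + 2) (m + 2) (padPartition a' b' n τ) (padPartition c' d' m σ) := by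
  set g := fun i j => |rectIncr R (padPartition a' b' n τ i) (padPartition a' b' n τ (i + 1))
    (padPartition c' d' m σ j) (padPartition c' d' m σ (j + 1))| ^ p
  have hg : ∀ i j, 0 ≤ g i j := fun i j => Real.rpow_nonneg (abs_nonneg _) p
  calc gridSum p R n m τ σ = ∑ i ∈ range n, ∑ j ∈ range m, g (i + 1) (j + 1) := by
        refine sum_congr rfl fun i hi => sum_congr rfl fun j hj => ?_
        rw [Finset.mem_range] at hi hj
        simp only [g, padPartition_succ τ (by omega : i ≤ n), padPartition_succ τ hi,
          padPartition_succ σ (by omega : j ≤ m), padPartition_succ σ hj]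
    _ ≤ ∑ i ∈ range n, ∑ j ∈ range (m + 2), g (i + 1) j :=
        sum_le_sum fun i _ => sum_range_succ_le_sum_range_add_two (hg (i + 1)) m
    _ ≤ ∑ i ∈ range (n + 2), ∑ j ∈ range (m + 2), g i j :=
        sum_range_succ_le_sum_range_add_two (fun i => sum_nonneg fun j _ => hg i j) n

lemma pVar2d_mono {p : ℝ} (hp : 0 ≤ p) (R : ℝ → ℝ → ℝ) {a b c d a' b' c' d' : ℝ}
    (ha : a' ≤ a) (hb : b ≤ b') (hc : c' ≤ c) (hd : d ≤ d') :
    pVar2d p R a b c d ≤ pVar2d p R a' b' c' d' := by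
  simp only [pVar2d_eq_iSup_gridSum, iSup_le_iff]
  intro n m τ σ hτ hσ
  refine le_iSup_of_le (n + 2) <| le_iSup_of_le (m + 2) <|
    le_iSup_of_le (padPartition a' b' n τ) <| le_iSup_of_le (padPartition c' d' m σ) <|
    le_iSup_of_le (hτ.pad ha hb) <| le_iSup_of_le (hσ.pad hc hd) ?_
  refine ENNReal.ofReal_le_ofReal <| Real.rpow_le_rpow ?_
    (gridSum_le_gridSum_padPartition R a' b' c' d' n m τ σ) (by positivity)
  exact sum_nonneg fun i _ => sum_nonneg fun j _ => Real.rpow_nonneg (abs_nonneg _) p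

lemma pVar2d_sq_le_mul {p : ℝ} (hp : 0 ≤ p) (R : ℝ → ℝ → ℝ) {T s₁ s₂ t₁ t₂ : ℝ}
    (hs₁ : 0 ≤ s₁) (hs₂ : s₂ ≤ T) (ht₁ : 0 ≤ t₁) (ht₂ : t₂ ≤ T) :
    pVar2d p R s₁ s₂ t₁ t₂ ^ 2 ≤ pVar2d p R s₁ s₂ 0 T * pVar2d p R 0 T t₁ t₂ := by
  rw [sq]
  exact mul_le_mul' (pVar2d_mono hp R le_rfl le_rfl ht₁ ht₂)
    (pVar2d_mono hp R hs₁ hs₂ le_rfl le_rfl)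

theorem pVar2d_rect_bound_general
    (T C ρ : ℝ) (hρ1 : 1 ≤ ρ) (hC : 0 ≤ C)
    (R : ℝ → ℝ → ℝ)
    (hvar₁ : ∀ s t : ℝ, 0 ≤ s → s ≤ t → t ≤ T →
      pVar2d ρ R s t 0 T ^ ρ ≤ ENNReal.ofReal (C * (t - s)))
    (hvar₂ : ∀ u v : ℝ, 0 ≤ u → u ≤ v → v ≤ T →
      pVar2d ρ R 0 T u v ^ ρ ≤ ENNReal.ofReal (C * (v - u))) :
    ∀ s₁ s₂ t₁ t₂ : ℝ, 0 ≤ s₁ → s₁ ≤ s₂ → s₂ ≤ T → 0 ≤ t₁ → t₁ ≤ t₂ → t₂ ≤ T →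
      pVar2d ρ R s₁ s₂ t₁ t₂ ^ (2 * ρ) ≤
        ENNReal.ofReal (C ^ 2 * (s₂ - s₁) * (t₂ - t₁)) := by
  intro s₁ s₂ t₁ t₂ hs₁ hs₁₂ hs₂ ht₁ ht₁₂ ht₂
  have hρ : 0 ≤ ρ := by linarith
  calc pVar2d ρ R s₁ s₂ t₁ t₂ ^ (2 * ρ) = (pVar2d ρ R s₁ s₂ t₁ t₂ ^ 2) ^ ρ := by
        rw [ENNReal.rpow_mul, ENNReal.rpow_two]
    _ ≤ (pVar2d ρ R s₁ s₂ 0 T * pVar2d ρ R 0 T t₁ t₂) ^ ρ :=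
        ENNReal.rpow_le_rpow (pVar2d_sq_le_mul hρ R hs₁ hs₂ ht₁ ht₂) hρ
    _ = pVar2d ρ R s₁ s₂ 0 T ^ ρ * pVar2d ρ R 0 T t₁ t₂ ^ ρ := ENNReal.mul_rpow_of_nonneg _ _ hρ
    _ ≤ ENNReal.ofReal (C * (s₂ - s₁)) * ENNReal.ofReal (C * (t₂ - t₁)) :=
        mul_le_mul' (hvar₁ s₁ s₂ hs₁ hs₁₂ hs₂) (hvar₂ t₁ t₂ ht₁ ht₁₂ ht₂)
    _ = ENNReal.ofReal (C ^ 2 * (s₂ - s₁) * (t₂ - t₁)) := by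
        rw [← ENNReal.ofReal_mul (mul_nonneg hC (by linarith))]
        ring_nf

/-- If `‖R‖_{ρ-var;[s,t]×[0,T]}^ρ ≤ C(t−s)` and symmetrically in the second variable,
then `‖R‖_{ρ-var;[s₁,s₂]×[t₁,t₂]}^{2ρ} ≤ C²(s₂−s₁)(t₂−t₁)` on all subrectangles. -/
theorem pVar2d_rect_bound
    (T C ρ : ℝ) (hρ1 : 1 ≤ ρ) (hρ2 : ρ < 2) (hC : 0 ≤ C)
    (R : ℝ → ℝ → ℝ)
    (hcont : ContinuousOn (fun z : ℝ × ℝ => R z.1 z.2) (Set.Icc 0 T ×ˢ Set.Icc 0 T))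
    (hvar₁ : ∀ s t : ℝ, 0 ≤ s → s ≤ t → t ≤ T →
      pVar2d ρ R s t 0 T ^ ρ ≤ ENNReal.ofReal (C * (t - s)))
    (hvar₂ : ∀ u v : ℝ, 0 ≤ u → u ≤ v → v ≤ T →
      pVar2d ρ R 0 T u v ^ ρ ≤ ENNReal.ofReal (C * (v - u))) :
    ∀ s₁ s₂ t₁ t₂ : ℝ, 0 ≤ s₁ → s₁ ≤ s₂ → s₂ ≤ T → 0 ≤ t₁ → t₁ ≤ t₂ → t₂ ≤ T →
      pVar2d ρ R s₁ s₂ t₁ t₂ ^ (2 * ρ) ≤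
        ENNReal.ofReal (C ^ 2 * (s₂ - s₁) * (t₂ - t₁)) :=
  pVar2d_rect_bound_general T C ρ hρ1 hC R hvar₁ hvar₂
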